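/- arXiv:1610.00488 — 4 statements merged into one kernel-verified Lean document; each statement's English description precedes it below -/
import Mathlib

section
/- Let K = ℚ(√m) (m > 0 squarefree) be a real quadratic field whose ring of integers O_K has class number one, and fix a real embedding of K so that elements of O_K are regarded as real numbers. Let ε be a unit of O_K with |ε| > 1. Assume the abc conjecture for K. Then there exist infinitely many non-Wieferich primes in O_K with respect to the base ε, i.e., the set of prime elements π of O_K satisfying ε^(N(π)−1) ≢ 1 (mod π²) is infinite. -/
open NumberField IsDedekindDomain Filter
open scoped Classical
set_option linter.unusedSectionVars false
set_option maxHeartbeats 1000000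
set_option synthInstance.maxHeartbeats 400000

variable (K : Type*) [Field K] [NumberField K]

/-- The absolute value of the norm `N_{K/ℚ}` of an algebraic integer, as a natural number. -/
noncomputable def absNormElem (x : 𝓞 K) : ℕ := (Algebra.norm ℤ x).natAbs

/-- `v_𝔭(p)`: the ramification index of the prime ideal `𝔭 = v.asIdeal` over the rational
prime `p` lying below it (`pℤ = 𝔭 ∩ ℤ`). -/
noncomputable def ramIdxOverQ (v : HeightOneSpectrum (𝓞 K)) : ℕ :=
  Ideal.ramificationIdx'
    (Ideal.comap (algebraMap ℤ (𝓞 K)) v.asIdeal) v.asIdeal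

/-- `‖x‖_v = N(𝔭)^(−v_𝔭(x))` for a finite place `v`, with `‖0‖_v = 0`. -/
noncomputable def normAtFin (v : HeightOneSpectrum (𝓞 K)) (x : K) : ℝ :=
  if h : v.valuation K x = 0 then 0
  else (Ideal.absNorm v.asIdeal : ℝ) ^ (Multiplicative.toAdd (WithZero.unzero h))

/-- `‖x‖_w = |g(x)|^e` for an archimedean place `w`, where `e = 1` if `w` is real and
`e = 2` if `w` is complex. -/
noncomputable def normAtInf (w : InfinitePlace K) (x : K) : ℝ := (w x) ^ w.mult

/-- The height `H_K(a,b,c) = ∏_v max(‖a‖_v, ‖b‖_v, ‖c‖_v)`, the product running over all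
(finite and infinite) places of `K`. -/
noncomputable def heightK (a b c : K) : ℝ :=
  (∏ᶠ v : HeightOneSpectrum (𝓞 K),
      max (max (normAtFin K v a) (normAtFin K v b)) (normAtFin K v c)) *
  ∏ w : InfinitePlace K,
      max (max (normAtInf K w a) (normAtInf K w b)) (normAtInf K w c)

/-- The radical `rad_K(a,b,c) = ∏_{𝔭 ∈ I_K(a,b,c)} N(𝔭)^(v_𝔭(p))`, where `I_K(a,b,c)` is the
set of prime ideals of `𝓞 K` at which `‖a‖_v, ‖b‖_v, ‖c‖_v` are not all equal. -/
noncomputable def radK (a b c : K) : ℝ :=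
  ∏ᶠ v : HeightOneSpectrum (𝓞 K),
    if normAtFin K v a = normAtFin K v b ∧ normAtFin K v b = normAtFin K v c then 1
    else (Ideal.absNorm v.asIdeal : ℝ) ^ (ramIdxOverQ K v)

/-- The abc conjecture for the number field `K`: for every `δ > 0` there is a constant
`C(K,δ)` such that `H_K(a,b,c) ≤ C(K,δ) · rad_K(a,b,c)^(1+δ)` for all nonzero
`a, b, c ∈ K` with `a + b + c = 0`. -/
noncomputable def AbcConjecture : Prop :=
  ∀ δ : ℝ, 0 < δ → ∃ C : ℝ, 0 < C ∧ ∀ a b c : K, a ≠ 0 → b ≠ 0 → c ≠ 0 →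
    a + b + c = 0 → heightK K a b c ≤ C * (radK K a b c) ^ (1 + δ)

section NWAux

variable {K}

lemma NW.one_lt_absNorm (v : HeightOneSpectrum (𝓞 K)) : 1 < Ideal.absNorm v.asIdeal := by
  have h0 : Ideal.absNorm v.asIdeal ≠ 0 := by
    rw [Ne, Ideal.absNorm_eq_zero_iff]
    exact v.ne_bot
  have h1 : Ideal.absNorm v.asIdeal ≠ 1 := by
    rw [Ne, Ideal.absNorm_eq_one_iff]
    exact v.isPrime.ne_top
  omega

lemma NW.normAtFin_eq_one_of_valuation_eq_one {v : HeightOneSpectrum (𝓞 K)} {x : K}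
    (h : v.valuation K x = 1) : normAtFin K v x = 1 := by
  rw [normAtFin, dif_neg (h ▸ one_ne_zero)]
  have : WithZero.unzero (h ▸ one_ne_zero : v.valuation K x ≠ 0) = 1 := by
    rw [← WithZero.coe_inj, WithZero.coe_unzero, h]; rfl
  rw [this]
  simp

lemma NW.normAtFin_le_one {v : HeightOneSpectrum (𝓞 K)} {x : K}
    (h : v.valuation K x ≤ 1) : normAtFin K v x ≤ 1 := by
  rw [normAtFin]
  split
  · norm_num
  · rename_i h0
    rw [show (1:ℝ) = (Ideal.absNorm v.asIdeal : ℝ) ^ (0:ℤ) by simp]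
    apply zpow_le_zpow_right₀
    · exact_mod_cast (NW.one_lt_absNorm v).le
    · have h2 := WithZero.coe_unzero h0
      rw [← h2, ← WithZero.coe_one, WithZero.coe_le_coe] at h
      exact h

lemma NW.normAtFin_ne_one {v : HeightOneSpectrum (𝓞 K)} {x : K}
    (h0 : v.valuation K x ≠ 0) (h : v.valuation K x < 1) : normAtFin K v x ≠ 1 := by
  rw [normAtFin, dif_neg h0]
  have h2 := WithZero.coe_unzero h0
  rw [← h2, ← WithZero.coe_one, WithZero.coe_lt_coe] at h
  have hlt := h
  have : (Ideal.absNorm v.asIdeal : ℝ) ^ (Multiplicative.toAdd (WithZero.unzero h0))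
      < (Ideal.absNorm v.asIdeal : ℝ) ^ (0:ℤ) := by
    apply zpow_lt_zpow_right₀
    · exact_mod_cast NW.one_lt_absNorm v
    · exact hlt
  simp only [zpow_zero] at this
  exact ne_of_lt this

lemma NW.valuation_unit (v : HeightOneSpectrum (𝓞 K)) (u : (𝓞 K)ˣ) :
    v.valuation K (algebraMap (𝓞 K) K (u : 𝓞 K)) = 1 := by
  have ha := v.valuation_le_one (K := K) (u : 𝓞 K)
  have hb := v.valuation_le_one (K := K) ((u⁻¹ : (𝓞 K)ˣ) : 𝓞 K)
  have hab : v.valuation K (algebraMap (𝓞 K) K (u : 𝓞 K)) *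
      v.valuation K (algebraMap (𝓞 K) K ((u⁻¹ : (𝓞 K)ˣ) : 𝓞 K)) = 1 := by
    rw [← Valuation.map_mul, ← map_mul]
    norm_num
  refine le_antisymm ha ?_
  calc (1 : WithZero (Multiplicative ℤ)) = _ * _ := hab.symm
    _ ≤ v.valuation K (algebraMap (𝓞 K) K (u : 𝓞 K)) * 1 := mul_le_mul_right hb _
    _ = v.valuation K (algebraMap (𝓞 K) K (u : 𝓞 K)) := mul_one _

lemma NW.maximal (v : HeightOneSpectrum (𝓞 K)) : v.asIdeal.IsMaximal :=
  v.isPrime.isMaximal v.ne_bot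

lemma NW.comap_ne_bot (v : HeightOneSpectrum (𝓞 K)) :
    Ideal.comap (algebraMap ℤ (𝓞 K)) v.asIdeal ≠ ⊥ := by
  intro h
  have hmem : ((Ideal.absNorm v.asIdeal : ℤ)) ∈ Ideal.comap (algebraMap ℤ (𝓞 K)) v.asIdeal := by
    rw [Ideal.mem_comap]
    have := Ideal.absNorm_mem v.asIdeal
    simpa using this
  rw [h, Ideal.mem_bot] at hmem
  have : Ideal.absNorm v.asIdeal = 0 := by exact_mod_cast hmem
  rw [Ideal.absNorm_eq_zero_iff] at this
  exact v.ne_bot this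

lemma NW.map_comap_ne_bot (v : HeightOneSpectrum (𝓞 K)) :
    Ideal.map (algebraMap ℤ (𝓞 K)) (Ideal.comap (algebraMap ℤ (𝓞 K)) v.asIdeal) ≠ ⊥ := by
  rw [Ne, Ideal.map_eq_bot_iff_of_injective (algebraMap ℤ (𝓞 K)).injective_int]
  exact NW.comap_ne_bot v

lemma NW.ramIdx_pos (v : HeightOneSpectrum (𝓞 K)) : 1 ≤ ramIdxOverQ K v := by
  rw [Nat.one_le_iff_ne_zero, ramIdxOverQ]
  exact Ideal.IsDedekindDomain.ramificationIdx_ne_zero (NW.map_comap_ne_bot v)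
    v.isPrime Ideal.map_comap_le

lemma NW.comap_isMaximal (v : HeightOneSpectrum (𝓞 K)) :
    (Ideal.comap (algebraMap ℤ (𝓞 K)) v.asIdeal).IsMaximal := by
  haveI : (Ideal.comap (algebraMap ℤ (𝓞 K)) v.asIdeal).IsPrime :=
    Ideal.IsPrime.comap _ (hK := v.isPrime)
  exact Ideal.IsPrime.isMaximal inferInstance (NW.comap_ne_bot v)

lemma NW.pow_ramIdx_dvd_different (v : HeightOneSpectrum (𝓞 K)) :
    v.asIdeal ^ (ramIdxOverQ K v - 1) ∣ differentIdeal ℤ (𝓞 K) := by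
  haveI := NW.comap_isMaximal v
  exact pow_sub_one_dvd_differentIdeal ℤ v.asIdeal (ramIdxOverQ K v) (NW.comap_ne_bot v)
    (Ideal.dvd_iff_le.mpr (by rw [ramIdxOverQ]; exact Ideal.le_pow_ramificationIdx'))

lemma NW.prod_pow_dvd {T : Finset (HeightOneSpectrum (𝓞 K))}
    (g : HeightOneSpectrum (𝓞 K) → ℕ) (J : Ideal (𝓞 K))
    (hdvd : ∀ v ∈ T, v.asIdeal ^ (g v) ∣ J) :
    (∏ v ∈ T, v.asIdeal ^ (g v)) ∣ J := by
  apply Finset.prod_dvd_of_coprime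
  · intro v hv w hw hvw
    have hne : v.asIdeal ≠ w.asIdeal := fun h => hvw (HeightOneSpectrum.ext h)
    exact (Ideal.isCoprime_iff_sup_eq.mpr (Ideal.IsMaximal.coprime_of_ne (NW.maximal v) (NW.maximal w) hne)).pow
  · exact fun v hv => hdvd v hv

lemma NW.key {π : 𝓞 K} (hπ : Prime π) (ε : (𝓞 K)ˣ) {n : ℕ}
    (hdvd : π ∣ (ε : 𝓞 K) ^ n - 1)
    (hw : π ^ 2 ∣ (ε : 𝓞 K) ^ (absNormElem K π - 1) - 1) :
    π ^ 2 ∣ (ε : 𝓞 K) ^ n - 1 := by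
  set I : Ideal (𝓞 K) := Ideal.span {π} with hIdef
  have hI : I.IsPrime := (Ideal.span_singleton_prime hπ.ne_zero).mpr hπ
  have hIbot : I ≠ ⊥ := by
    simpa [hIdef, Ideal.span_singleton_eq_bot] using hπ.ne_zero
  haveI hImax : I.IsMaximal := hI.isMaximal hIbot
  letI : Field (𝓞 K ⧸ I) := Ideal.Quotient.field I
  letI : Fintype (𝓞 K ⧸ I) := @Fintype.ofFinite _ (Ideal.finiteQuotientOfFreeOfNeBot I hIbot)
  set q := absNormElem K π with hqdef
  have hq : q = Fintype.card (𝓞 K ⧸ I) := by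
    rw [hqdef, absNormElem, ← Ideal.absNorm_span_singleton, Ideal.absNorm_apply,
      Submodule.cardQuot_apply, Nat.card_eq_fintype_card]
  set f := Ideal.Quotient.mk I with hfdef
  set u : (𝓞 K ⧸ I)ˣ := Units.map (f : 𝓞 K →* (𝓞 K ⧸ I)) ε with hudef
  have hu_pow : ∀ k : ℕ, u ^ k = 1 ↔ π ∣ (ε : 𝓞 K) ^ k - 1 := by
    intro k
    rw [← Ideal.mem_span_singleton, ← hIdef, ← Ideal.Quotient.eq_zero_iff_mem]
    rw [Units.ext_iff]
    have h1 : ((u ^ k : (𝓞 K ⧸ I)ˣ) : 𝓞 K ⧸ I) = f ((ε : 𝓞 K) ^ k) := by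
      rw [hudef]; push_cast; rfl
    rw [h1]
    have h2 : f ((ε : 𝓞 K) ^ k - 1) = f ((ε : 𝓞 K) ^ k) - f 1 :=
      map_sub f _ _
    rw [map_one] at h2
    rw [h2, sub_eq_zero]
    rw [Units.val_one]
  set d := orderOf u with hddef
  have hdn : d ∣ n := orderOf_dvd_of_pow_eq_one ((hu_pow n).mpr hdvd)
  have hq2 : 2 ≤ q := by rw [hq]; exact Fintype.one_lt_card
  have hdq : d ∣ q - 1 := by
    have h := orderOf_dvd_card (x := u)
    rwa [Fintype.card_units, ← hq] at h
  set m := (q - 1) / d with hmdef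
  have hdm : d * m = q - 1 := Nat.mul_div_cancel' hdq
  set x := (ε : 𝓞 K) ^ d with hxdef
  have hx1 : π ∣ x - 1 := (hu_pow d).mp (pow_orderOf_eq_one u)
  set g := ∑ i ∈ Finset.range m, x ^ i with hgdef
  have hgeom : g * (x - 1) = x ^ m - 1 := geom_sum_mul x m
  have hxm : π ^ 2 ∣ x ^ m - 1 := by
    rw [hxdef, ← pow_mul, hdm]; exact hw
  have hπm : ¬ π ∣ ((m : ℕ) : 𝓞 K) := by
    intro hdiv
    obtain ⟨fd, hp, hcard⟩ := FiniteField.card (𝓞 K ⧸ I) (ringChar (𝓞 K ⧸ I))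
    set p := ringChar (𝓞 K ⧸ I)
    have hpm : p ∣ m := by
      have h0 : ((m : ℕ) : (𝓞 K ⧸ I)) = 0 := by
        have hmem : ((m : ℕ) : 𝓞 K) ∈ I := Ideal.mem_span_singleton.mpr hdiv
        rw [← map_natCast f m]
        exact Ideal.Quotient.eq_zero_iff_mem.mpr hmem
      exact (CharP.cast_eq_zero_iff _ p m).mp h0
    have hpq : p ∣ q := by
      rw [hq, hcard]; exact dvd_pow_self p fd.ne_zero
    have hm1 : m ∣ q - 1 := ⟨d, by rw [← hdm, mul_comm]⟩
    have h1 : p ∣ q - (q - 1) := Nat.dvd_sub hpq (hpm.trans hm1)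
    rw [show q - (q - 1) = 1 by omega] at h1
    exact hp.one_lt.ne' (Nat.dvd_one.mp h1)
  have hπg : ¬ π ∣ g := by
    intro hg
    apply hπm
    have hsub : x - 1 ∣ g - ((m : ℕ) : 𝓞 K) := by
      have hgg : g - ((m : ℕ) : 𝓞 K) = ∑ i ∈ Finset.range m, (x ^ i - 1) := by
        rw [Finset.sum_sub_distrib, Finset.sum_const, Finset.card_range]
        simp [hgdef]
      rw [hgg]
      exact Finset.dvd_sum fun i _ => by
        simpa using sub_dvd_pow_sub_pow x 1 i
    have h2 : π ∣ g - ((m : ℕ) : 𝓞 K) := hx1.trans hsub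
    have := dvd_sub hg h2
    rwa [sub_sub_cancel] at this
  obtain ⟨y, hy⟩ := hx1
  have hx2 : π ^ 2 ∣ x - 1 := by
    have h3 : π ^ 2 ∣ π * (g * y) := by
      have : g * (x - 1) = π * (g * y) := by rw [hy]; ring
      rw [← this, hgeom]; exact hxm
    rw [pow_two] at h3
    have h4 : π ∣ g * y := (mul_dvd_mul_iff_left hπ.ne_zero).mp h3
    rcases hπ.dvd_mul.mp h4 with h5 | h5
    · exact absurd h5 hπg
    · obtain ⟨y', hy'⟩ := h5
      rw [hy, hy', pow_two]
      exact ⟨y', by ring⟩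
  obtain ⟨k, hk⟩ := hdn
  have hfin : x - 1 ∣ (ε : 𝓞 K) ^ n - 1 := by
    rw [hk, pow_mul, ← hxdef]
    have := sub_dvd_pow_sub_pow x 1 k
    simpa using this
  exact hx2.trans hfin

lemma NW.absNormElem_unit_mul (u : (𝓞 K)ˣ) (x : 𝓞 K) :
    absNormElem K ((u : 𝓞 K) * x) = absNormElem K x := by
  have h : IsUnit (Algebra.norm ℤ (u : 𝓞 K)) := (Units.isUnit u).map (Algebra.norm ℤ)
  rw [absNormElem, absNormElem, map_mul, Int.natAbs_mul]
  rcases Int.isUnit_iff.mp h with h1 | h1 <;> rw [h1] <;> simp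

lemma NW.set_infinite (φ : K →+* ℝ) (ε : (𝓞 K)ˣ)
    (hε : 1 < |φ (algebraMap (𝓞 K) K (ε : 𝓞 K))|)
    {π₀ : 𝓞 K} (h1 : Prime π₀)
    (h2 : ¬ (π₀ ^ 2 ∣ (ε : 𝓞 K) ^ (absNormElem K π₀ - 1) - 1)) :
    {π : 𝓞 K | Prime π ∧
      ¬ (π ^ 2 ∣ (ε : 𝓞 K) ^ (absNormElem K π - 1) - 1)}.Infinite := by
  apply Set.infinite_of_injective_forall_mem
    (f := fun k : ℕ => ((ε ^ k : (𝓞 K)ˣ) : 𝓞 K) * π₀)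
  · intro j k hjk
    simp only at hjk
    have h3 : ((ε ^ j : (𝓞 K)ˣ) : 𝓞 K) = ((ε ^ k : (𝓞 K)ˣ) : 𝓞 K) :=
      mul_right_cancel₀ h1.ne_zero hjk
    have h4 : (φ (algebraMap (𝓞 K) K (ε : 𝓞 K))) ^ j
        = (φ (algebraMap (𝓞 K) K (ε : 𝓞 K))) ^ k := by
      have := congrArg (fun y : 𝓞 K => φ (algebraMap (𝓞 K) K y)) h3
      simpa [Units.val_pow_eq_pow_val, map_pow] using this
    have h5 : |φ (algebraMap (𝓞 K) K (ε : 𝓞 K))| ^ j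
        = |φ (algebraMap (𝓞 K) K (ε : 𝓞 K))| ^ k := by
      rw [← abs_pow, ← abs_pow, h4]
    exact (pow_right_strictMono₀ hε).injective h5
  · intro k
    have hassoc : Associated π₀ (((ε ^ k : (𝓞 K)ˣ) : 𝓞 K) * π₀) :=
      ⟨ε ^ k, mul_comm _ _⟩
    constructor
    · exact hassoc.prime h1
    · rw [NW.absNormElem_unit_mul]
      intro hdvd
      apply h2
      exact (Associated.pow_pow (n := 2) hassoc).dvd_iff_dvd_left.mpr hdvd

lemma NW.places_structure (hdeg : Module.finrank ℚ K = 2) (φ : K →+* ℝ) :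
    ∃ w₁ w₂ : InfinitePlace K, w₂ ≠ w₁ ∧ w₁.mult = 1 ∧ w₂.mult = 1 ∧
      (Finset.univ : Finset (InfinitePlace K)) = {w₁, w₂} ∧
      (∀ x : K, w₁ x = |φ x|) := by
  set ψ : K →+* ℂ := Complex.ofRealHom.comp φ with hψ
  have hreal : ComplexEmbedding.IsReal ψ := by
    rw [NumberField.ComplexEmbedding.isReal_iff]
    ext x
    simp [hψ, NumberField.ComplexEmbedding.conjugate]
  set w₁ := InfinitePlace.mk ψ with hw1
  have hw1real : w₁.IsReal := ⟨ψ, hreal, rfl⟩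
  have hmult1 : w₁.mult = 1 := by rw [InfinitePlace.mult, if_pos hw1real]
  have happly : ∀ x : K, w₁ x = |φ x| := by
    intro x
    rw [hw1, InfinitePlace.apply]
    simp [hψ]
  have hsum := InfinitePlace.sum_mult_eq (K := K)
  rw [hdeg] at hsum
  rw [← Finset.add_sum_erase _ _ (Finset.mem_univ w₁), hmult1] at hsum
  have hsum1 : ∑ w ∈ Finset.univ.erase w₁, InfinitePlace.mult w = 1 := by omega
  have hcard : (Finset.univ.erase w₁).card ≤ 1 := by
    calc (Finset.univ.erase w₁).card = ∑ _w ∈ Finset.univ.erase w₁, 1 := by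
          rw [Finset.sum_const, smul_eq_mul, mul_one]
      _ ≤ ∑ w ∈ Finset.univ.erase w₁, InfinitePlace.mult w :=
          Finset.sum_le_sum fun w _ => InfinitePlace.mult_pos
      _ = 1 := hsum1
  have hne : (Finset.univ.erase w₁).Nonempty := by
    rw [Finset.nonempty_iff_ne_empty]
    intro h
    rw [h, Finset.sum_empty] at hsum1
    exact one_ne_zero hsum1.symm
  have hcard1 : (Finset.univ.erase w₁).card = 1 :=
    le_antisymm hcard (Finset.Nonempty.card_pos hne)
  obtain ⟨w₂, hw2⟩ := Finset.card_eq_one.mp hcard1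
  refine ⟨w₁, w₂, ?_, hmult1, ?_, ?_, happly⟩
  · have : w₂ ∈ Finset.univ.erase w₁ := by rw [hw2]; exact Finset.mem_singleton_self w₂
    exact Finset.ne_of_mem_erase this
  · rw [hw2, Finset.sum_singleton] at hsum1; exact hsum1
  · rw [← Finset.insert_erase (Finset.mem_univ w₁), hw2]

lemma NW.different_ne_bot : differentIdeal ℤ (𝓞 K) ≠ ⊥ := by
  intro h
  have h2 := coeIdeal_differentIdeal ℤ ℚ K (𝓞 K)
  rw [h] at h2
  have hd0 : FractionalIdeal.dual ℤ ℚ (1 : FractionalIdeal (nonZeroDivisors (𝓞 K)) K) ≠ 0 :=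
    FractionalIdeal.dual_ne_zero ℤ ℚ one_ne_zero
  have h3 := mul_inv_cancel₀ hd0
  rw [← h2] at h3
  simp at h3

lemma NW.absNormElem_eq_prod (x : 𝓞 K) :
    (absNormElem K x : ℝ) = ∏ w : InfinitePlace K, w (algebraMap (𝓞 K) K x) ^ w.mult := by
  rw [InfinitePlace.prod_eq_abs_norm]
  have h1 : Algebra.norm ℚ (algebraMap (𝓞 K) K x) = ((Algebra.norm ℤ x : ℤ) : ℚ) :=
    (Algebra.coe_norm_int x).symm
  rw [h1, absNormElem]
  push_cast
  simp [Nat.cast_natAbs]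

lemma NW.winf_neg_one (w : InfinitePlace K) : w (-1 : K) = 1 := by
  have h := w.1.map_neg (1 : K)
  have h2 : w (-1 : K) = w.1 (-1 : K) := rfl
  rw [h2, h]
  exact map_one w.1

lemma NW.normAtInf_neg_one (w : InfinitePlace K) : normAtInf K w (-1 : K) = 1 := by
  rw [normAtInf, NW.winf_neg_one, one_pow]

lemma NW.height_ge (φ : K →+* ℝ) (w₁ w₂ : InfinitePlace K) (hne : w₂ ≠ w₁)
    (hw : (Finset.univ : Finset (InfinitePlace K)) = {w₁, w₂})
    (hm1 : w₁.mult = 1) (happly : ∀ x : K, w₁ x = |φ x|) (ε : (𝓞 K)ˣ) (n : ℕ) :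
    |φ (algebraMap (𝓞 K) K (ε : 𝓞 K))| ^ n ≤
      heightK K (algebraMap (𝓞 K) K ((ε : 𝓞 K) ^ n)) (-1 : K)
        (algebraMap (𝓞 K) K (1 - (ε : 𝓞 K) ^ n)) := by
  rw [heightK]
  have hfin : (∏ᶠ v : HeightOneSpectrum (𝓞 K),
      max (max (normAtFin K v (algebraMap (𝓞 K) K ((ε : 𝓞 K) ^ n)))
        (normAtFin K v (-1 : K)))
        (normAtFin K v (algebraMap (𝓞 K) K (1 - (ε : 𝓞 K) ^ n)))) = 1 := by
    apply finprod_eq_one_of_forall_eq_one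
    intro v
    have ha : normAtFin K v (algebraMap (𝓞 K) K ((ε : 𝓞 K) ^ n)) = 1 := by
      apply NW.normAtFin_eq_one_of_valuation_eq_one
      rw [show ((ε : 𝓞 K) ^ n) = ((ε ^ n : (𝓞 K)ˣ) : 𝓞 K) by rw [Units.val_pow_eq_pow_val]]
      exact NW.valuation_unit v (ε ^ n)
    have hb : normAtFin K v (-1 : K) = 1 := by
      apply NW.normAtFin_eq_one_of_valuation_eq_one
      rw [Valuation.map_neg, map_one]
    have hc : normAtFin K v (algebraMap (𝓞 K) K (1 - (ε : 𝓞 K) ^ n)) ≤ 1 :=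
      NW.normAtFin_le_one (v.valuation_le_one (K := K) _)
    rw [ha, hb, max_self]
    exact max_eq_left hc
  rw [hfin, one_mul]
  have hone : ∀ w : InfinitePlace K, w ∈ Finset.univ → (1:ℝ) ≤
      max (max (normAtInf K w (algebraMap (𝓞 K) K ((ε : 𝓞 K) ^ n)))
        (normAtInf K w (-1 : K)))
        (normAtInf K w (algebraMap (𝓞 K) K (1 - (ε : 𝓞 K) ^ n))) := by
    intro w _
    have := NW.normAtInf_neg_one (K := K) w
    calc (1:ℝ) = normAtInf K w (-1 : K) := this.symm
      _ ≤ max (normAtInf K w (algebraMap (𝓞 K) K ((ε : 𝓞 K) ^ n))) (normAtInf K w (-1:K)) :=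
          le_max_right _ _
      _ ≤ _ := le_max_left _ _
  have hkey : |φ (algebraMap (𝓞 K) K (ε : 𝓞 K))| ^ n ≤
      max (max (normAtInf K w₁ (algebraMap (𝓞 K) K ((ε : 𝓞 K) ^ n)))
        (normAtInf K w₁ (-1 : K)))
        (normAtInf K w₁ (algebraMap (𝓞 K) K (1 - (ε : 𝓞 K) ^ n))) := by
    have h1 : normAtInf K w₁ (algebraMap (𝓞 K) K ((ε : 𝓞 K) ^ n))
        = |φ (algebraMap (𝓞 K) K (ε : 𝓞 K))| ^ n := by
      rw [normAtInf, hm1, pow_one, happly, map_pow, map_pow, abs_pow]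
    calc |φ (algebraMap (𝓞 K) K (ε : 𝓞 K))| ^ n
        = normAtInf K w₁ (algebraMap (𝓞 K) K ((ε : 𝓞 K) ^ n)) := h1.symm
      _ ≤ max (normAtInf K w₁ (algebraMap (𝓞 K) K ((ε : 𝓞 K) ^ n))) (normAtInf K w₁ (-1:K)) :=
          le_max_left _ _
      _ ≤ _ := le_max_left _ _
  rw [hw, Finset.prod_pair (Ne.symm hne)]
  have h2 := hone w₂ (Finset.mem_univ w₂)
  calc |φ (algebraMap (𝓞 K) K (ε : 𝓞 K))| ^ n
      = |φ (algebraMap (𝓞 K) K (ε : 𝓞 K))| ^ n * 1 := (mul_one _).symm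
    _ ≤ _ := mul_le_mul hkey h2 zero_le_one
        (le_trans zero_le_one (le_trans (hone w₁ (Finset.mem_univ w₁)) (le_refl _)))

lemma NW.rad_eq (ε : (𝓞 K)ˣ) (n : ℕ) (hβ : (1 - (ε : 𝓞 K) ^ n) ≠ 0) :
    ∃ T : Finset (HeightOneSpectrum (𝓞 K)),
      (∀ v ∈ T, v.asIdeal ∣ Ideal.span {1 - (ε : 𝓞 K) ^ n}) ∧
      radK K (algebraMap (𝓞 K) K ((ε : 𝓞 K) ^ n)) (-1 : K)
          (algebraMap (𝓞 K) K (1 - (ε : 𝓞 K) ^ n))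
        = ((∏ v ∈ T, Ideal.absNorm v.asIdeal ^ (ramIdxOverQ K v) : ℕ) : ℝ) := by
  set β : 𝓞 K := 1 - (ε : 𝓞 K) ^ n with hβdef
  have hspan : Ideal.span {β} ≠ 0 := by
    rw [Ne, Ideal.zero_eq_bot, Ideal.span_singleton_eq_bot]
    exact hβ
  have hfin := Ideal.finite_factors hspan
  refine ⟨hfin.toFinset, fun v hv => (Set.Finite.mem_toFinset hfin).mp hv, ?_⟩
  have ha : ∀ v : HeightOneSpectrum (𝓞 K),
      normAtFin K v (algebraMap (𝓞 K) K ((ε : 𝓞 K) ^ n)) = 1 := by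
    intro v
    apply NW.normAtFin_eq_one_of_valuation_eq_one
    rw [show ((ε : 𝓞 K) ^ n) = ((ε ^ n : (𝓞 K)ˣ) : 𝓞 K) by rw [Units.val_pow_eq_pow_val]]
    exact NW.valuation_unit v (ε ^ n)
  have hb : ∀ v : HeightOneSpectrum (𝓞 K), normAtFin K v (-1 : K) = 1 := by
    intro v
    apply NW.normAtFin_eq_one_of_valuation_eq_one
    rw [Valuation.map_neg, map_one]
  rw [radK]
  rw [finprod_eq_prod_of_mulSupport_subset _ (s := hfin.toFinset) ?sub]
  case sub =>
    intro v hv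
    simp only [Function.mem_mulSupport] at hv
    rw [Set.Finite.coe_toFinset]
    by_contra hnd
    simp only [Set.mem_setOf_eq] at hnd
    apply hv
    rw [if_pos]
    refine ⟨by rw [ha, hb], ?_⟩
    rw [hb]
    refine (NW.normAtFin_eq_one_of_valuation_eq_one ?_).symm
    have hle := v.valuation_le_one (K := K) β
    have hnlt : ¬ v.valuation K (algebraMap (𝓞 K) K β) < 1 := by
      rw [v.valuation_lt_one_iff_dvd]
      exact hnd
    exact le_antisymm hle (not_lt.mp hnlt)
  rw [Nat.cast_prod]
  apply Finset.prod_congr rfl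
  intro v hv
  rw [Set.Finite.mem_toFinset] at hv
  rw [if_neg, Nat.cast_pow]
  intro hcond
  apply NW.normAtFin_ne_one (v := v) (x := algebraMap (𝓞 K) K β)
  · rw [Valuation.ne_zero_iff]
    intro h0
    apply hβ
    exact (map_eq_zero_iff _ (FaithfulSMul.algebraMap_injective (𝓞 K) K)).mp h0
  · rw [v.valuation_lt_one_iff_dvd]
    exact hv
  · rw [← hcond.2, hb]

lemma NW.absNormElem_pos {x : 𝓞 K} (hx : x ≠ 0) : 0 < absNormElem K x := by
  rw [absNormElem, ← Ideal.absNorm_span_singleton]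
  rw [Nat.pos_iff_ne_zero, Ne, Ideal.absNorm_eq_zero_iff, Ideal.span_singleton_eq_bot]
  exact hx

lemma NW.absNormElem_unit (u : (𝓞 K)ˣ) : absNormElem K (u : 𝓞 K) = 1 := by
  have h : IsUnit (Algebra.norm ℤ (u : 𝓞 K)) := (Units.isUnit u).map (Algebra.norm ℤ)
  rw [absNormElem]
  rcases Int.isUnit_iff.mp h with h1 | h1 <;> rw [h1] <;> rfl

lemma NW.nat_ineqs (β : 𝓞 K) (hβ : β ≠ 0) (T : Finset (HeightOneSpectrum (𝓞 K)))
    (hdvd2 : ∀ v ∈ T, v.asIdeal ^ 2 ∣ Ideal.span {β}) :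
    (∏ v ∈ T, Ideal.absNorm v.asIdeal ^ ramIdxOverQ K v)
        ≤ Ideal.absNorm (differentIdeal ℤ (𝓞 K)) * ∏ v ∈ T, Ideal.absNorm v.asIdeal ∧
    (∏ v ∈ T, Ideal.absNorm v.asIdeal) ^ 2 ≤ absNormElem K β := by
  constructor
  · have hsplit : (∏ v ∈ T, Ideal.absNorm v.asIdeal ^ ramIdxOverQ K v)
        = (∏ v ∈ T, Ideal.absNorm v.asIdeal ^ (ramIdxOverQ K v - 1))
          * ∏ v ∈ T, Ideal.absNorm v.asIdeal := by
      rw [← Finset.prod_mul_distrib]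
      apply Finset.prod_congr rfl
      intro v hv
      rw [← pow_succ, Nat.sub_add_cancel (NW.ramIdx_pos v)]
    rw [hsplit]
    apply Nat.mul_le_mul_right
    have hd : (∏ v ∈ T, v.asIdeal ^ (ramIdxOverQ K v - 1)) ∣ differentIdeal ℤ (𝓞 K) :=
      NW.prod_pow_dvd _ _ (fun v _ => NW.pow_ramIdx_dvd_different v)
    have habs : (∏ v ∈ T, Ideal.absNorm v.asIdeal ^ (ramIdxOverQ K v - 1))
        ∣ Ideal.absNorm (differentIdeal ℤ (𝓞 K)) := by
      have h := Ideal.absNorm_dvd_absNorm_of_le (Ideal.le_of_dvd hd)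
      rw [map_prod] at h
      calc (∏ v ∈ T, Ideal.absNorm v.asIdeal ^ (ramIdxOverQ K v - 1))
          = ∏ v ∈ T, Ideal.absNorm (v.asIdeal ^ (ramIdxOverQ K v - 1)) :=
            Finset.prod_congr rfl fun v _ => (map_pow Ideal.absNorm _ _).symm
        _ ∣ _ := h
    refine Nat.le_of_dvd ?_ habs
    rw [Nat.pos_iff_ne_zero, Ne, Ideal.absNorm_eq_zero_iff]
    exact NW.different_ne_bot
  · have hd : (∏ v ∈ T, v.asIdeal ^ 2) ∣ Ideal.span {β} := NW.prod_pow_dvd _ _ hdvd2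
    have habs := Ideal.absNorm_dvd_absNorm_of_le (Ideal.le_of_dvd hd)
    rw [map_prod] at habs
    have heq : absNormElem K β = Ideal.absNorm (Ideal.span {β}) := by
      rw [absNormElem, Ideal.absNorm_span_singleton]
    rw [heq]
    refine Nat.le_of_dvd ?_ ?_
    · rw [Nat.pos_iff_ne_zero, Ne, Ideal.absNorm_eq_zero_iff, Ideal.span_singleton_eq_bot]
      exact hβ
    · calc (∏ v ∈ T, Ideal.absNorm v.asIdeal) ^ 2
          = ∏ v ∈ T, Ideal.absNorm (v.asIdeal ^ 2) := by
            rw [← Finset.prod_pow]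
            exact Finset.prod_congr rfl fun v _ => (map_pow Ideal.absNorm _ 2).symm
        _ ∣ Ideal.absNorm (Ideal.span {β}) := habs

lemma NW.arch_bound (φ : K →+* ℝ) (w₁ w₂ : InfinitePlace K) (hne : w₂ ≠ w₁)
    (hw : (Finset.univ : Finset (InfinitePlace K)) = {w₁, w₂})
    (hm1 : w₁.mult = 1) (hm2 : w₂.mult = 1) (happly : ∀ x : K, w₁ x = |φ x|)
    (ε : (𝓞 K)ˣ) (hε : 1 < |φ (algebraMap (𝓞 K) K (ε : 𝓞 K))|) (n : ℕ) :
    ((absNormElem K (1 - (ε : 𝓞 K) ^ n) : ℕ) : ℝ)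
      ≤ 4 * |φ (algebraMap (𝓞 K) K (ε : 𝓞 K))| ^ n := by
  set E : K := algebraMap (𝓞 K) K (ε : 𝓞 K) with hE
  set L : ℝ := |φ E| with hL
  have hL1 : 1 ≤ L := hε.le
  have hLn : 1 ≤ L ^ n := one_le_pow₀ hL1
  -- product formula for the unit
  have hunit : w₁ E * w₂ E = 1 := by
    have h := NW.absNormElem_eq_prod (ε : 𝓞 K)
    rw [NW.absNormElem_unit, hw, Finset.prod_pair (Ne.symm hne), hm1, hm2,
      pow_one, pow_one] at h
    exact_mod_cast h.symm
  have hw1E : w₁ E = L := by rw [happly]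
  have hw2E_le : w₂ E ≤ 1 := by
    have hpos : (0:ℝ) < L := lt_of_lt_of_le one_pos hL1
    have : w₂ E = L⁻¹ := by
      field_simp at hunit ⊢
      rw [hw1E] at hunit
      linarith [hunit]
    rw [this]
    exact inv_le_one_of_one_le₀ hL1
  -- bound the two archimedean absolute values of β
  have hX : algebraMap (𝓞 K) K (1 - (ε : 𝓞 K) ^ n) = 1 - E ^ n := by
    rw [map_sub, map_one, map_pow]
  have hb1 : w₁ (algebraMap (𝓞 K) K (1 - (ε : 𝓞 K) ^ n)) ≤ 2 * L ^ n := by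
    rw [hX, happly]
    have : |φ (1 - E ^ n)| ≤ 1 + L ^ n := by
      rw [map_sub, map_one, map_pow]
      calc |1 - φ E ^ n| ≤ |(1:ℝ)| + |φ E ^ n| := abs_sub _ _
        _ = 1 + L ^ n := by rw [abs_one, abs_pow]
    linarith
  have hb2 : w₂ (algebraMap (𝓞 K) K (1 - (ε : 𝓞 K) ^ n)) ≤ 2 := by
    rw [hX]
    have h1 : w₂ (1 - E ^ n) ≤ w₂ 1 + w₂ (E ^ n) := by
      have := w₂.1.sub_le_add (1 : K) (E ^ n)
      exact this
    have h2 : w₂ (E ^ n) = (w₂ E) ^ n := map_pow w₂ E n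
    have h3 : (w₂ E) ^ n ≤ 1 := pow_le_one₀ (w₂.1.nonneg E) hw2E_le
    have h4 : w₂ (1 : K) = 1 := map_one w₂
    linarith
  have hnn1 : 0 ≤ w₁ (algebraMap (𝓞 K) K (1 - (ε : 𝓞 K) ^ n)) := w₁.1.nonneg _
  have hnn2 : 0 ≤ w₂ (algebraMap (𝓞 K) K (1 - (ε : 𝓞 K) ^ n)) := w₂.1.nonneg _
  rw [NW.absNormElem_eq_prod, hw, Finset.prod_pair (Ne.symm hne), hm1, hm2, pow_one, pow_one]
  calc w₁ (algebraMap (𝓞 K) K (1 - (ε : 𝓞 K) ^ n)) *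
        w₂ (algebraMap (𝓞 K) K (1 - (ε : 𝓞 K) ^ n))
      ≤ (2 * L ^ n) * 2 := by
        apply mul_le_mul hb1 hb2 hnn2
        positivity
    _ = 4 * L ^ n := by ring

lemma NW.main_contra (hdeg : Module.finrank ℚ K = 2) (φ : K →+* ℝ) (ε : (𝓞 K)ˣ)
    (hε : 1 < |φ (algebraMap (𝓞 K) K (ε : 𝓞 K))|) (habc : AbcConjecture K)
    (hsq : ∀ n : ℕ, 1 ≤ n → ∀ v : HeightOneSpectrum (𝓞 K),
      v.asIdeal ∣ Ideal.span {1 - (ε : 𝓞 K) ^ n} →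
      v.asIdeal ^ 2 ∣ Ideal.span {1 - (ε : 𝓞 K) ^ n}) : False := by
  obtain ⟨w₁, w₂, hne, hm1, hm2, hw, happly⟩ := NW.places_structure hdeg φ
  obtain ⟨C, hC, hABC⟩ := habc (1/2) (by norm_num)
  set E : K := algebraMap (𝓞 K) K (ε : 𝓞 K) with hE
  set L : ℝ := |φ E| with hLdef
  have hL : 1 < L := hε
  have hL0 : (0:ℝ) < L := lt_trans one_pos hL
  set D : ℝ := (Ideal.absNorm (differentIdeal ℤ (𝓞 K)) : ℝ) with hDdef
  have hD0 : (0:ℝ) < D := by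
    rw [hDdef]
    have : Ideal.absNorm (differentIdeal ℤ (𝓞 K)) ≠ 0 := by
      rw [Ne, Ideal.absNorm_eq_zero_iff]; exact NW.different_ne_bot
    positivity
  set C₀ : ℝ := C * (2 * D) ^ ((3:ℝ)/2) with hC0def
  have hC00 : 0 < C₀ := by
    apply mul_pos hC
    apply Real.rpow_pos_of_pos
    linarith
  -- the key estimate for every n ≥ 1
  have hkey : ∀ n : ℕ, 1 ≤ n → L ^ n ≤ C₀ * (L ^ n) ^ ((3:ℝ)/4) := by
    intro n hn
    have hβ : (1 - (ε : 𝓞 K) ^ n) ≠ 0 := by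
      intro h
      have h2 : ((ε : 𝓞 K) ^ n : 𝓞 K) = 1 := by
        have := sub_eq_zero.mp h; rw [← this]
      have h3 : E ^ n = 1 := by
        rw [hE, ← map_pow, h2, map_one]
      have h4 : L ^ n = 1 := by
        rw [hLdef, ← abs_pow, ← map_pow, h3, map_one, abs_one]
      have h5 : 1 < L ^ n := one_lt_pow₀ hL (by omega)
      rw [h4] at h5; exact lt_irrefl 1 h5
    -- abc inequality for the triple
    have habc' := hABC (algebraMap (𝓞 K) K ((ε : 𝓞 K) ^ n)) (-1 : K)
        (algebraMap (𝓞 K) K (1 - (ε : 𝓞 K) ^ n))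
        (by
          simp only [map_pow, ne_eq, pow_eq_zero_iff', map_eq_zero]
          intro h
          rcases h with ⟨h1, -⟩
          exact (Units.ne_zero ε) ((map_eq_zero_iff _
            (FaithfulSMul.algebraMap_injective (𝓞 K) K)).mp h1))
        (by norm_num)
        (by
          rw [Ne, map_eq_zero_iff _ (FaithfulSMul.algebraMap_injective (𝓞 K) K)]
          exact hβ)
        (by rw [map_sub, map_one]; ring)
    obtain ⟨T, hTdvd, hTrad⟩ := NW.rad_eq ε n hβ
    obtain ⟨h1, h2⟩ := NW.nat_ineqs (1 - (ε : 𝓞 K) ^ n) hβ T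
      (fun v hv => hsq n hn v (hTdvd v hv))
    set s : ℕ := ∏ v ∈ T, Ideal.absNorm v.asIdeal with hsdef
    -- real bound on s
    have hs_real : (s:ℝ) ≤ 2 * L ^ ((n:ℝ)/2) := by
      have hs2 : ((s:ℝ))^2 ≤ (2 * L ^ ((n:ℝ)/2))^2 := by
        have ha := NW.arch_bound φ w₁ w₂ hne hw hm1 hm2 happly ε hε n
        have hb : ((s^2 : ℕ) : ℝ) ≤ ((absNormElem K (1 - (ε : 𝓞 K) ^ n) : ℕ) : ℝ) := by
          exact_mod_cast h2
        have hc : (2 * L ^ ((n:ℝ)/2))^2 = 4 * L ^ n := by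
          rw [mul_pow, ← Real.rpow_natCast (L ^ ((n:ℝ)/2)) 2, ← Real.rpow_mul hL0.le]
          norm_num
        rw [hc]
        push_cast at hb
        exact le_trans hb ha
      have hnn : (0:ℝ) ≤ 2 * L ^ ((n:ℝ)/2) := by positivity
      nlinarith [Nat.cast_nonneg (α := ℝ) s]
    -- combine
    have hrad_le : radK K (algebraMap (𝓞 K) K ((ε : 𝓞 K) ^ n)) (-1 : K)
        (algebraMap (𝓞 K) K (1 - (ε : 𝓞 K) ^ n)) ≤ D * (2 * L ^ ((n:ℝ)/2)) := by
      rw [hTrad]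
      calc ((∏ v ∈ T, Ideal.absNorm v.asIdeal ^ (ramIdxOverQ K v) : ℕ) : ℝ)
          ≤ ((Ideal.absNorm (differentIdeal ℤ (𝓞 K)) * s : ℕ) : ℝ) := by exact_mod_cast h1
        _ = D * (s:ℝ) := by push_cast; rfl
        _ ≤ D * (2 * L ^ ((n:ℝ)/2)) := by
            apply mul_le_mul_of_nonneg_left hs_real hD0.le
    have hrad_nonneg : (0:ℝ) ≤ radK K (algebraMap (𝓞 K) K ((ε : 𝓞 K) ^ n)) (-1 : K)
        (algebraMap (𝓞 K) K (1 - (ε : 𝓞 K) ^ n)) := by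
      rw [hTrad]; positivity
    have hheight := NW.height_ge φ w₁ w₂ hne hw hm1 happly ε n
    have hfinal : L ^ n ≤ C * (D * (2 * L ^ ((n:ℝ)/2))) ^ ((1:ℝ) + 1/2) := by
      calc L ^ n ≤ heightK K (algebraMap (𝓞 K) K ((ε : 𝓞 K) ^ n)) (-1 : K)
            (algebraMap (𝓞 K) K (1 - (ε : 𝓞 K) ^ n)) := hheight
        _ ≤ C * (radK K _ (-1 : K) _) ^ ((1:ℝ) + 1/2) := habc'
        _ ≤ C * (D * (2 * L ^ ((n:ℝ)/2))) ^ ((1:ℝ) + 1/2) := by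
            apply mul_le_mul_of_nonneg_left _ hC.le
            exact Real.rpow_le_rpow hrad_nonneg hrad_le (by norm_num)
    -- simplify RHS
    have hrhs : C * (D * (2 * L ^ ((n:ℝ)/2))) ^ ((1:ℝ) + 1/2) = C₀ * (L ^ n) ^ ((3:ℝ)/4) := by
      rw [hC0def]
      have e1 : D * (2 * L ^ ((n:ℝ)/2)) = (2*D) * L ^ ((n:ℝ)/2) := by ring
      rw [e1, Real.mul_rpow (by positivity) (by positivity)]
      have e2 : (L ^ ((n:ℝ)/2)) ^ ((1:ℝ) + 1/2) = (L ^ (n:ℕ) : ℝ) ^ ((3:ℝ)/4) := by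
        rw [← Real.rpow_natCast L n, ← Real.rpow_mul hL0.le, ← Real.rpow_mul hL0.le]
        congr 1
        ring
      rw [e2]
      have e3 : ((1:ℝ) + 1/2) = (3:ℝ)/2 := by norm_num
      rw [e3]
      ring
    rw [hrhs] at hfinal
    exact hfinal
  -- contradiction
  obtain ⟨N, hN0⟩ := pow_unbounded_of_one_lt (C₀ ^ 4) hL
  have hN : C₀ ^ 4 < L ^ (N + 1) :=
    lt_of_lt_of_le hN0 (pow_le_pow_right₀ hL.le (Nat.le_succ N))
  have h1 := hkey (N + 1) (Nat.le_add_left 1 N)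
  set X : ℝ := L ^ (N + 1) with hXdef
  have hX1 : 1 < X := one_lt_pow₀ hL (Nat.succ_ne_zero N)
  have hX0 : (0:ℝ) < X := lt_trans one_pos hX1
  have h4 : (0:ℝ) < X ^ ((3:ℝ)/4) := Real.rpow_pos_of_pos hX0 _
  have h2 : X ^ ((1:ℝ)/4) ≤ C₀ := by
    have hmul : X ^ ((3:ℝ)/4) * X ^ ((1:ℝ)/4) ≤ X ^ ((3:ℝ)/4) * C₀ := by
      calc X ^ ((3:ℝ)/4) * X ^ ((1:ℝ)/4) = X := by
            rw [← Real.rpow_add hX0]; norm_num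
        _ ≤ C₀ * X ^ ((3:ℝ)/4) := h1
        _ = X ^ ((3:ℝ)/4) * C₀ := mul_comm _ _
    exact (mul_le_mul_iff_right₀ h4).mp hmul
  have h6 : (X ^ ((1:ℝ)/4)) ^ (4:ℕ) ≤ C₀ ^ (4:ℕ) :=
    pow_le_pow_left₀ (Real.rpow_nonneg hX0.le _) h2 4
  have h7 : (X ^ ((1:ℝ)/4)) ^ (4:ℕ) = X := by
    rw [← Real.rpow_natCast (X ^ ((1:ℝ)/4)) 4, ← Real.rpow_mul hX0.le]
    norm_num
  rw [h7] at h6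
  linarith

end NWAux

/-- **Non-Wieferich primes in real quadratic fields.**
Let `K = ℚ(√m)` (`m > 0` squarefree) be a real quadratic field of class number one, with a
fixed real embedding `φ`, and assume the abc conjecture for `K`. Then for any unit `ε` of
`𝓞 K` with `|ε| > 1`, there are infinitely many non-Wieferich primes with respect to the
base `ε`, i.e. the set of prime elements `π` of `𝓞 K` with
`ε^(N(π)−1) ≢ 1 (mod π²)` is infinite. -/
theorem infinitely_many_nonWieferich_primes_real_quadratic
    (m : ℕ) (hm : 0 < m) (hmsf : Squarefree m)
    (θ : K) (hθ : θ ^ 2 = (m : K))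
    (hgen : IntermediateField.adjoin ℚ {θ} = ⊤)
    (hdeg : Module.finrank ℚ K = 2)
    (hclass : NumberField.classNumber K = 1)
    (φ : K →+* ℝ)
    (ε : (𝓞 K)ˣ) (hε : 1 < |φ (algebraMap (𝓞 K) K (ε : 𝓞 K))|)
    (habc : AbcConjecture K) :
    {π : 𝓞 K | Prime π ∧
      ¬ (π ^ 2 ∣ (ε : 𝓞 K) ^ (absNormElem K π - 1) - 1)}.Infinite := by
  by_cases hne : {π : 𝓞 K | Prime π ∧
      ¬ (π ^ 2 ∣ (ε : 𝓞 K) ^ (absNormElem K π - 1) - 1)}.Nonempty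
  · obtain ⟨π₀, h1, h2⟩ := hne
    exact NW.set_infinite φ ε hε h1 h2
  · exfalso
    have hall : ∀ π : 𝓞 K, Prime π →
        π ^ 2 ∣ (ε : 𝓞 K) ^ (absNormElem K π - 1) - 1 := by
      intro π hp
      by_contra hcon
      exact hne ⟨π, hp, hcon⟩
    haveI hPIR : IsPrincipalIdealRing (𝓞 K) :=
      NumberField.classNumber_eq_one_iff.mp hclass
    apply NW.main_contra hdeg φ ε hε habc
    intro n hn v hvdvd
    obtain ⟨π, hgen⟩ := (IsPrincipalIdealRing.principal v.asIdeal).principal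
    rw [Ideal.submodule_span_eq] at hgen
    have hπ0 : π ≠ 0 := by
      intro h
      apply v.ne_bot
      rw [hgen, h, Ideal.span_singleton_eq_bot]
    have hπprime : Prime π := by
      rw [← Ideal.span_singleton_prime hπ0, ← hgen]
      exact v.isPrime
    have hdvd1 : π ∣ (ε : 𝓞 K) ^ n - 1 := by
      have h1 : Ideal.span {π} ∣ Ideal.span {1 - (ε : 𝓞 K) ^ n} := by
        rw [← hgen]; exact hvdvd
      have h2 := Ideal.span_singleton_le_span_singleton.mp (Ideal.le_of_dvd h1)
      have h3 : (1 - (ε : 𝓞 K) ^ n) = -((ε : 𝓞 K) ^ n - 1) := by ring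
      rw [h3, dvd_neg] at h2
      exact h2
    have hkey := NW.key hπprime ε hdvd1 (hall π hπprime)
    have h4 : π ^ 2 ∣ 1 - (ε : 𝓞 K) ^ n := by
      have h3 : (1 - (ε : 𝓞 K) ^ n) = -((ε : 𝓞 K) ^ n - 1) := by ring
      rw [h3, dvd_neg]
      exact hkey
    rw [hgen, Ideal.span_singleton_pow]
    exact Ideal.dvd_iff_le.mpr (Ideal.span_singleton_le_span_singleton.mpr h4)
end

section
/- Let K = ℚ(√m) (m > 0 squarefree) be a real quadratic field of class number one and let ε be a unit of O_K. Fix n ∈ ℕ and write ε^n − 1 = u_n·v_n, where u_n is the squarefree part and v_n is the squarefull part of ε^n − 1. Then every prime element π of O_K dividing u_n is a non-Wieferich prime with respect to the base ε, i.e., ε^(N(π)−1) ≢ 1 (mod π²). -/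
open NumberField Filter

variable (K : Type*) [Field K] [NumberField K]

/-!
Write `N = N(π)`. Since `π ∣ N`, the exponent `N - 1` is prime to `π`. Put `d = gcd(n, N - 1)`:
as `π` divides both `ε^n - 1` and `ε^(N-1) - 1`, it divides `t = ε^d - 1`, and the expansion
`(1 + t)^k ≡ 1 + k t (mod t²)` shows that for `k` prime to `π`, `π²` divides `(1 + t)^k - 1`
only if it divides `t`. Hence `π² ∣ ε^(N-1) - 1` would give `π² ∣ ε^d - 1 ∣ ε^n - 1 = u v`,
which is impossible because `π` divides the squarefree `u` and is prime to `v`.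
-/

section CommRing

variable {R : Type*} [CommRing R]

theorem dvd_pow_gcd_sub_one {p x : R} {m n : ℕ} (hm : p ∣ x ^ m - 1) (hn : p ∣ x ^ n - 1) :
    p ∣ x ^ m.gcd n - 1 := by
  simp only [← Ideal.mem_span_singleton, ← Ideal.Quotient.eq, map_pow, map_one] at hm hn ⊢
  exact pow_gcd_eq_one.mpr ⟨hm, hn⟩

theorem Prime.sq_dvd_sub_one_of_sq_dvd_pow_sub_one [IsDomain R] {π y : R} (hπ : Prime π)
    {k : ℕ} (hy : π ∣ y - 1) (hk : ¬π ∣ (k : R)) (h : π ^ 2 ∣ y ^ k - 1) : π ^ 2 ∣ y - 1 := by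
  have hbinom : (y - 1) ^ 2 ∣ y ^ k - (y - 1) * k - 1 := by
    simpa only [add_sub_cancel, one_pow, one_mul] using sq_dvd_add_pow_sub_sub (y - 1) 1 k
  obtain ⟨s, hs⟩ := hy
  have hks : π * π ∣ π * (k * s) := by
    have := dvd_sub h ((pow_dvd_pow_of_dvd ⟨s, hs⟩ 2).trans hbinom)
    rw [hs] at this
    convert this using 1 <;> ring
  rw [mul_dvd_mul_iff_left hπ.ne_zero] at hks
  rw [hs, sq]
  exact mul_dvd_mul_left π ((hπ.dvd_or_dvd hks).resolve_left hk)

theorem Prime.sq_dvd_pow_sub_one_of_sq_dvd_pow_sub_one [IsDomain R] {π x : R} (hπ : Prime π)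
    {n N : ℕ} (hn : π ∣ x ^ n - 1) (hN : ¬π ∣ (N : R)) (h : π ^ 2 ∣ x ^ N - 1) :
    π ^ 2 ∣ x ^ n - 1 := by
  have hd : π ∣ x ^ n.gcd N - 1 := dvd_pow_gcd_sub_one hn ((dvd_pow_self π two_ne_zero).trans h)
  obtain ⟨k, hk⟩ := Nat.gcd_dvd_right n N
  obtain ⟨j, hj⟩ := Nat.gcd_dvd_left n N
  have hπk : ¬π ∣ (k : R) := fun hπk ↦
    hN (hπk.trans ⟨n.gcd N, by rw [mul_comm, ← Nat.cast_mul, ← hk]⟩)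
  rw [hk, pow_mul] at h
  rw [hj, pow_mul]
  exact (hπ.sq_dvd_sub_one_of_sq_dvd_pow_sub_one hd hπk h).trans (sub_one_dvd_pow_sub_one _ j)

theorem Prime.not_sq_dvd_mul_of_squarefree [IsDomain R] {π u v : R} (hπ : Prime π)
    (hπu : π ∣ u) (hu : Squarefree u) (huv : IsCoprime u v) : ¬π ^ 2 ∣ u * v := by
  have hπv : ¬π ∣ v := fun hπv ↦ hπ.not_isUnit (huv.isUnit_of_dvd' hπu hπv)
  intro h
  exact hπ.not_isUnit (hu π (sq π ▸ hπ.pow_dvd_of_dvd_mul_right 2 hπv h))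

theorem not_dvd_natCast_sub_one {π : R} (hπ : ¬IsUnit π) {N : ℕ} (hN : π ∣ (N : R))
    (hN0 : N ≠ 0) : ¬π ∣ ((N - 1 : ℕ) : R) := by
  rw [Nat.cast_pred (Nat.pos_of_ne_zero hN0)]
  intro h
  exact hπ (isUnit_of_dvd_one (by simpa using dvd_sub hN h))

end CommRing

theorem absNormElem_eq_absNorm_span (x : 𝓞 K) :
    absNormElem K x = Ideal.absNorm (Ideal.span {x}) :=
  (Ideal.absNorm_span_singleton x).symm

theorem dvd_absNormElem (x : 𝓞 K) : x ∣ (absNormElem K x : 𝓞 K) := by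
  rw [← Ideal.mem_span_singleton, absNormElem_eq_absNorm_span]
  exact Ideal.absNorm_mem _

theorem absNormElem_ne_zero {x : 𝓞 K} (hx : x ≠ 0) : absNormElem K x ≠ 0 := by
  simpa [absNormElem_eq_absNorm_span] using hx

theorem nonWieferich_of_dvd_squarefree_part_real_quadratic
    (ε : (𝓞 K)ˣ) (n : ℕ) (u v : 𝓞 K)
    (huv : (ε : 𝓞 K) ^ n - 1 = u * v)
    (hu : Squarefree u)
    (hcop : IsCoprime u v)
    (π : 𝓞 K) (hπ : Prime π) (hπu : π ∣ u) :
    ¬ (π ^ 2 ∣ (ε : 𝓞 K) ^ (absNormElem K π - 1) - 1) := by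
  intro hwief
  have hπN : ¬π ∣ ((absNormElem K π - 1 : ℕ) : 𝓞 K) :=
    not_dvd_natCast_sub_one hπ.not_isUnit (dvd_absNormElem K π) (absNormElem_ne_zero K hπ.ne_zero)
  have hπn : π ∣ (ε : 𝓞 K) ^ n - 1 := huv ▸ hπu.mul_right v
  refine hπ.not_sq_dvd_mul_of_squarefree hπu hu hcop ?_
  rw [← huv]
  exact hπ.sq_dvd_pow_sub_one_of_sq_dvd_pow_sub_one hπn hπN hwief
end

section
/- Let K be an algebraic number field of class number one, let ε be a unit of O_K, let π be a prime element of O_K, and suppose that for some n ∈ ℕ and w ∈ O_K one has ε^n = 1 + π·w with π ∤ w. Then ε^(N(π)−1) ≢ 1 (mod π²). (Equivalently: if a prime π divides ε^n − 1 but π² does not divide ε^n − 1, then π is a non-Wieferich prime to the base ε.) -/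
open NumberField Filter

variable (K : Type*) [Field K] [NumberField K]

/-!
Write `q = N(π)`. A Wieferich congruence `π² ∣ ε^(q-1) - 1` would give
`π² ∣ ε^(n(q-1)) - 1 = (1 + πw)^(q-1) - 1 ≡ (q-1)πw (mod π²)`, hence `π ∣ q - 1` because `π ∤ w`.
But `π` divides the norm `q` of the ideal `(π)`, so `π ∣ 1`.
-/

theorem Prime.dvd_natCast_of_sq_dvd_one_add_mul_pow_sub_one {R : Type*} [CommRing R] [IsDomain R]
    {π w : R} (hπ : Prime π) (hw : ¬π ∣ w) {m : ℕ} (h : π ^ 2 ∣ (1 + π * w) ^ m - 1) :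
    π ∣ (m : R) := by
  have hbinom : π ^ 2 ∣ (1 + π * w) ^ m - π * w * m - 1 := by
    have := sq_dvd_add_pow_sub_sub (π * w) 1 m
    rw [one_pow, one_pow, one_mul, mul_pow] at this
    exact (dvd_mul_right _ _).trans this
  have hlin : π * π ∣ π * (w * m) := by
    have := dvd_sub h hbinom
    rw [← sq]
    convert this using 1
    ring
  exact (hπ.dvd_mul.mp ((mul_dvd_mul_iff_left hπ.ne_zero).mp hlin)).resolve_left hw

theorem nonWieferich_of_exactly_divides
    (ε : (𝓞 K)ˣ) (π w : 𝓞 K) (n : ℕ) (hπ : Prime π)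
    (heq : (ε : 𝓞 K) ^ n = 1 + π * w) (hw : ¬ π ∣ w) :
    ¬ (π ^ 2 ∣ (ε : 𝓞 K) ^ (absNormElem K π - 1) - 1) := by
  intro hwief
  obtain ⟨k, hk⟩ := Nat.exists_eq_succ_of_ne_zero (absNormElem_ne_zero K hπ.ne_zero)
  have hpow : π ^ 2 ∣ (1 + π * w) ^ k - 1 := by
    rw [← heq, ← pow_mul, mul_comm, pow_mul]
    simpa [hk] using hwief.trans (sub_one_dvd_pow_sub_one _ n)
  have hk_dvd := hπ.dvd_natCast_of_sq_dvd_one_add_mul_pow_sub_one hw hpow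
  have hq_dvd := dvd_absNormElem K π
  rw [hk, Nat.cast_succ] at hq_dvd
  exact hπ.not_isUnit (isUnit_of_dvd_one (by simpa using dvd_sub hq_dvd hk_dvd))
end

section
/- Let K be an algebraic number field with r₁ real embeddings and r₂ pairs of complex embeddings, and let E = {k ∈ ℤ : 1 ≤ k ≤ r₁ + r₂}. Let E = A ∪ B be a proper partition of E (A and B nonempty and disjoint with union E). Then there exists a unit η ∈ O_K^× such that |η^(k)| < 1 for all k ∈ A and |η^(k)| > 1 for all k ∈ B, where η^(1), …, η^(r₁+r₂) denote the images of η under a fixed set of representatives of the r₁ + r₂ archimedean places of K (one embedding per place). -/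
open NumberField

open NumberField.InfinitePlace NumberField.Units NumberField.Units.dirichletUnitTheorem in
private lemma exists_lattice_approx {ι : Type*} [Fintype ι]
    (L : Submodule ℤ (ι → ℝ)) (hL : Submodule.span ℝ (L : Set (ι → ℝ)) = ⊤) :
    ∃ R : ℝ, 0 ≤ R ∧ ∀ x : ι → ℝ, ∃ y ∈ L, ‖x - y‖ ≤ R := by
  classical
  obtain ⟨s, hs_sub, hs_span, hs_li⟩ := exists_linearIndependent ℝ (L : Set (ι → ℝ))
  rw [hL] at hs_span
  haveI : Fintype s := (hs_li.setFinite).fintype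
  let b : Module.Basis s ℝ (ι → ℝ) := Module.Basis.mk hs_li (by rw [Subtype.range_coe, hs_span])
  refine ⟨∑ i : s, ‖(i : ι → ℝ)‖, Finset.sum_nonneg fun i _ => norm_nonneg _, fun x => ?_⟩
  set c : s → ℝ := fun i => b.repr x i with hc
  refine ⟨∑ i : s, round (c i) • (i : ι → ℝ),
    Submodule.sum_mem _ (fun i _ => Submodule.smul_mem _ _ (hs_sub i.2)), ?_⟩
  have hx : x = ∑ i : s, c i • (i : ι → ℝ) := by
    conv_lhs => rw [← b.sum_repr x]
    refine Finset.sum_congr rfl fun i _ => ?_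
    rw [hc]
    congr 1
    simp [b]
  have hsub : x - (∑ i : s, round (c i) • (i : ι → ℝ)) =
      ∑ i : s, (c i - (round (c i) : ℝ)) • (i : ι → ℝ) := by
    rw [hx, ← Finset.sum_sub_distrib]
    refine Finset.sum_congr rfl fun i _ => ?_
    rw [sub_smul, Int.cast_smul_eq_zsmul]
  rw [hsub]
  refine (norm_sum_le _ _).trans ?_
  refine Finset.sum_le_sum fun i _ => ?_
  rw [norm_smul, Real.norm_eq_abs]
  have h1 : |c i - (round (c i) : ℝ)| ≤ 1 :=
    (abs_sub_round _).trans (by norm_num)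
  calc |c i - (round (c i) : ℝ)| * ‖(i : ι → ℝ)‖
      ≤ 1 * ‖(i : ι → ℝ)‖ := by gcongr
    _ = ‖(i : ι → ℝ)‖ := one_mul _

open NumberField.InfinitePlace NumberField.Units NumberField.Units.dirichletUnitTheorem in
private lemma core_lemma
    (K : Type*) [Field K] [NumberField K]
    (A B : Set (InfinitePlace K)) (hB : B.Nonempty)
    (hdisj : Disjoint A B) (hcover : A ∪ B = Set.univ)
    (hw₀A : (w₀ : InfinitePlace K) ∈ A) :
    ∃ η : (𝓞 K)ˣ,
      (∀ w ∈ A, w (algebraMap (𝓞 K) K (η : 𝓞 K)) < 1) ∧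
      (∀ w ∈ B, 1 < w (algebraMap (𝓞 K) K (η : 𝓞 K))) := by
  classical
  obtain ⟨R, hR0, hR⟩ := exists_lattice_approx (unitLattice K) (unitLattice_span_eq_top K)
  set d := {w : InfinitePlace K // w ≠ (w₀ : InfinitePlace K)}
  set m : ℕ := Fintype.card d with hm
  set T : ℝ := m + 1 with hT
  have hT1 : (1 : ℝ) ≤ T := by
    rw [hT]
    have : (0:ℝ) ≤ (m:ℝ) := Nat.cast_nonneg m
    linarith
  -- every place is in A or B; places not in A are in B
  have hmemB : ∀ w : InfinitePlace K, w ∉ A → w ∈ B := fun w hw => by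
    have := Set.mem_univ w
    rw [← hcover] at this
    rcases this with h | h
    · exact absurd h hw
    · exact h
  have hnotA : ∀ w : InfinitePlace K, w ∈ B → w ∉ A := fun w hw hwa =>
    Set.disjoint_left.mp hdisj hwa hw
  -- the target point
  set p : d → ℝ := fun w => if (w : InfinitePlace K) ∈ A then -1 else T with hp
  -- a witness coordinate in B
  obtain ⟨wB, hwB⟩ := hB
  have hwBne : wB ≠ (w₀ : InfinitePlace K) := fun h => hnotA wB hwB (h ▸ hw₀A)
  set wB' : d := ⟨wB, hwBne⟩ with hwB'
  -- sum of p is at least 1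
  have hsum_p : (1 : ℝ) ≤ ∑ w : d, p w := by
    have h1 : p wB' = T := by
      rw [hp]; simp only [if_neg (hnotA wB hwB)]; exact if_neg (hnotA wB hwB)
    rw [← Finset.sum_erase_add _ _ (Finset.mem_univ wB'), h1]
    have h2 : ∀ w ∈ Finset.univ.erase wB', (-1 : ℝ) ≤ p w := fun w _ => by
      simp only [hp]
      split_ifs
      · exact le_refl _
      · linarith
    have h3 : -(m : ℝ) ≤ ∑ w ∈ Finset.univ.erase wB', p w := by
      calc -(m : ℝ) ≤ -((Finset.univ.erase wB').card : ℝ) := by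
            have : (Finset.univ.erase wB').card ≤ m := by
              rw [hm, ← Finset.card_univ]
              exact Finset.card_erase_le.trans le_rfl
            exact neg_le_neg (by exact_mod_cast this)
        _ = ∑ _w ∈ Finset.univ.erase wB', (-1 : ℝ) := by
            rw [Finset.sum_const, nsmul_eq_mul]; ring
        _ ≤ ∑ w ∈ Finset.univ.erase wB', p w := Finset.sum_le_sum h2
    linarith
  -- choose n large
  obtain ⟨n, hn⟩ := exists_nat_gt (max R ((m : ℝ) * R))
  have hnR : R < (n : ℝ) := lt_of_le_of_lt (le_max_left _ _) hn
  have hnmR : (m : ℝ) * R < (n : ℝ) := lt_of_le_of_lt (le_max_right _ _) hn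
  -- get a lattice point near n • p
  obtain ⟨y, hyL, hy⟩ := hR ((n : ℝ) • p)
  obtain ⟨u, -, hu⟩ := hyL
  set η : (𝓞 K)ˣ := Additive.toMul u with hη
  have hu' : logEmbedding K (Additive.ofMul η) = y := hu
  -- coordinatewise bounds
  have hcoord : ∀ w : d, |(n : ℝ) * p w - y w| ≤ R := fun w => by
    have := norm_le_pi_norm ((n : ℝ) • p - y) w
    simpa [Real.norm_eq_abs] using this.trans hy
  -- positivity of values of places on units
  have hpos : ∀ w : InfinitePlace K, 0 < w (algebraMap (𝓞 K) K (η : 𝓞 K)) := fun w =>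
    pos_iff.mpr (RingOfIntegers.coe_ne_zero_iff.mpr η.ne_zero)
  have hcoe : ∀ w : InfinitePlace K,
      w (algebraMap (𝓞 K) K (η : 𝓞 K)) = w ((η : K)) := fun w => rfl
  -- sign at places ≠ w₀
  have hsign : ∀ w : d, ((w : InfinitePlace K) ∈ A → y w < 0) ∧
      ((w : InfinitePlace K) ∉ A → 0 < y w) := fun w => by
    have h := hcoord w
    rw [abs_le] at h
    constructor
    · intro hwA
      have : p w = -1 := by
        simp only [hp]
        rw [if_pos hwA]
      rw [this] at h
      nlinarith [h.1, h.2]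
    · intro hwA
      have hpw : p w = T := by
        simp only [hp]
        rw [if_neg hwA]
      rw [hpw] at h
      have : (n : ℝ) * 1 ≤ (n : ℝ) * T := by
        apply mul_le_mul_of_nonneg_left hT1 (Nat.cast_nonneg n)
      nlinarith [h.1, h.2]
  -- translate sign of y w into sign of log
  have hlog : ∀ w : d, y w = (mult (w : InfinitePlace K) : ℝ) *
      Real.log ((w : InfinitePlace K) ((η : K))) := fun w => by
    rw [← hu', logEmbedding_component]
  have hmultpos : ∀ w : InfinitePlace K, (0 : ℝ) < (mult w : ℝ) := fun w => by
    exact_mod_cast mult_pos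
  -- sum bound
  have hsum_y : 0 < ∑ w : d, y w := by
    have h1 : ∀ w : d, (n : ℝ) * p w - R ≤ y w := fun w => by
      have := (abs_le.mp (hcoord w)).2
      linarith
    have h2 : ∑ w : d, ((n : ℝ) * p w - R) ≤ ∑ w : d, y w := Finset.sum_le_sum fun w _ => h1 w
    have h3 : ∑ w : d, ((n : ℝ) * p w - R) = (n : ℝ) * (∑ w : d, p w) - (m : ℝ) * R := by
      rw [Finset.sum_sub_distrib, ← Finset.mul_sum, Finset.sum_const, nsmul_eq_mul,
        Finset.card_univ]
    have h4 : (n : ℝ) * 1 ≤ (n : ℝ) * (∑ w : d, p w) :=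
      mul_le_mul_of_nonneg_left hsum_p (Nat.cast_nonneg n)
    nlinarith
  -- the value at w₀
  have hsumlog : ∑ w : d, y w =
      - (mult (w₀ : InfinitePlace K) : ℝ) * Real.log ((w₀ : InfinitePlace K) ((η : K))) := by
    rw [← hu']
    exact_mod_cast sum_logEmbedding_component η
  have hw₀lt : (w₀ : InfinitePlace K) (algebraMap (𝓞 K) K (η : 𝓞 K)) < 1 := by
    rw [hcoe]
    have hlogneg : Real.log ((w₀ : InfinitePlace K) ((η : K))) < 0 := by
      by_contra hcon
      push_neg at hcon
      have := hsumlog ▸ hsum_y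
      nlinarith [hmultpos (w₀ : InfinitePlace K)]
    have := hpos (w₀ : InfinitePlace K)
    rw [hcoe] at this
    exact (Real.log_neg_iff this).mp hlogneg
  refine ⟨η, fun w hw => ?_, fun w hw => ?_⟩
  · by_cases hwe : w = (w₀ : InfinitePlace K)
    · rw [hwe]; exact hw₀lt
    · have hy_neg := (hsign ⟨w, hwe⟩).1 hw
      rw [hlog ⟨w, hwe⟩] at hy_neg
      have hlogneg : Real.log (w ((η : K))) < 0 := by
        nlinarith [hmultpos w]
      rw [hcoe]
      have := hpos w
      rw [hcoe] at this
      exact (Real.log_neg_iff this).mp hlogneg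
  · have hwe : w ≠ (w₀ : InfinitePlace K) := fun h => hnotA w hw (h ▸ hw₀A)
    have hy_pos := (hsign ⟨w, hwe⟩).2 (hnotA w hw)
    rw [hlog ⟨w, hwe⟩] at hy_pos
    have hlogpos : 0 < Real.log (w ((η : K))) := by
      nlinarith [hmultpos w]
    rw [hcoe]
    have := hpos w
    rw [hcoe] at this
    exact (Real.log_pos_iff this.le).mp hlogpos

/-- Let `K` be a number field and let the set of its archimedean places (of which there are
`r₁ + r₂`) be split into a proper partition `A ∪ B` (both nonempty, disjoint). Then there
is a unit `η` of `𝓞 K` with `|η^(k)| = w(η) < 1` for every place `w ∈ A` and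
`|η^(k)| = w(η) > 1` for every place `w ∈ B`, where each archimedean place `w` is given by
a representative embedding `K → ℂ`. -/
theorem exists_unit_lt_one_on_gt_one_off
    (K : Type*) [Field K] [NumberField K]
    (A B : Set (InfinitePlace K)) (hA : A.Nonempty) (hB : B.Nonempty)
    (hdisj : Disjoint A B) (hcover : A ∪ B = Set.univ) :
    ∃ η : (𝓞 K)ˣ,
      (∀ w ∈ A, w (algebraMap (𝓞 K) K (η : 𝓞 K)) < 1) ∧
      (∀ w ∈ B, 1 < w (algebraMap (𝓞 K) K (η : 𝓞 K))) := by
  classical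
  have hw₀ : (NumberField.Units.dirichletUnitTheorem.w₀ : InfinitePlace K) ∈ A ∪ B := by
    rw [hcover]; trivial
  rcases hw₀ with hw₀A | hw₀B
  · exact core_lemma K A B hB hdisj hcover hw₀A
  · obtain ⟨η, h1, h2⟩ := core_lemma K B A hA hdisj.symm (by rw [Set.union_comm]; exact hcover) hw₀B
    have key : ∀ w : InfinitePlace K,
        w (algebraMap (𝓞 K) K ((η⁻¹ : (𝓞 K)ˣ) : 𝓞 K)) =
          (w (algebraMap (𝓞 K) K (η : 𝓞 K)))⁻¹ := by
      intro w
      have h : (algebraMap (𝓞 K) K (η : 𝓞 K)) *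
          (algebraMap (𝓞 K) K ((η⁻¹ : (𝓞 K)ˣ) : 𝓞 K)) = 1 := by
        rw [← map_mul, ← map_one (algebraMap (𝓞 K) K)]
        congr 1
        exact η.mul_inv
      have h2' := congrArg w h
      rw [map_mul, map_one] at h2'
      exact eq_inv_of_mul_eq_one_right h2'
    have hpos : ∀ w : InfinitePlace K, 0 < w (algebraMap (𝓞 K) K (η : 𝓞 K)) := fun w =>
      NumberField.InfinitePlace.pos_iff.mpr (RingOfIntegers.coe_ne_zero_iff.mpr η.ne_zero)
    refine ⟨η⁻¹, fun w hw => ?_, fun w hw => ?_⟩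
    · rw [key w, inv_lt_one_iff₀]
      right
      exact h2 w hw
    · rw [key w, one_lt_inv_iff₀]
      exact ⟨hpos w, h1 w hw⟩
end
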